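/- For all odd m ≥ 3 and even r ≥ 4 with mr = 2n, there exists a shiftable signed magic rectangle SMR(m, n; r, 2). -/
import Mathlib


/-- The set of values used by a signed magic rectangle SMR(m,n;r,s):
`{0, ±1, …, ±(ms−1)/2}` if `m*r` is odd, and `{±1, …, ±(m*r/2)}` if `m*r` is even. -/
def SMRvalue (m r s : ℕ) (x : ℤ) : Prop :=
  if m * r % 2 = 1 then |x| ≤ ((m : ℤ) * s - 1) / 2
  else x ≠ 0 ∧ |x| ≤ (m : ℤ) * r / 2

/-- `A` (a partially filled `m × n` integer array) is a signed magic rectangle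
SMR(m,n;r,s): exactly `r` filled cells per row, `s` per column, every value of
the value set appears exactly once, all entries are values, and all row and
column sums are zero. -/
def IsSMR (m n r s : ℕ) (A : Fin m → Fin n → Option ℤ) : Prop :=
  (∀ i, (Finset.univ.filter fun j => (A i j).isSome).card = r) ∧
  (∀ j, (Finset.univ.filter fun i => (A i j).isSome).card = s) ∧
  (∀ i j x, A i j = some x → SMRvalue m r s x) ∧
  (∀ x : ℤ, SMRvalue m r s x → ∃! p : Fin m × Fin n, A p.1 p.2 = some x) ∧
  (∀ i, ∑ j, (A i j).getD 0 = 0) ∧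
  (∀ j, ∑ i, (A i j).getD 0 = 0)

/-- A signed magic rectangle SMR(m,n;r,s) exists. -/
def SMR (m n r s : ℕ) : Prop := ∃ A : Fin m → Fin n → Option ℤ, IsSMR m n r s A

/-- The array has equally many positive and negative entries in every row and
in every column. -/
def IsShiftable (m n : ℕ) (A : Fin m → Fin n → Option ℤ) : Prop :=
  (∀ i, (Finset.univ.filter fun j => 0 < (A i j).getD 0).card =
        (Finset.univ.filter fun j => (A i j).getD 0 < 0).card) ∧
  (∀ j, (Finset.univ.filter fun i => 0 < (A i j).getD 0).card =
        (Finset.univ.filter fun i => (A i j).getD 0 < 0).card)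

/-- A shiftable signed magic rectangle SMR(m,n;r,s) exists. -/
def ShiftableSMR (m n r s : ℕ) : Prop :=
  ∃ A : Fin m → Fin n → Option ℤ, IsSMR m n r s A ∧ IsShiftable m n A

namespace SMR17

def sg (k j : ℕ) : ℤ := if j = 0 then 1 else if k % 2 = 1 then (-1)^(j+1) else (-1)^j
def pm (m k j i : ℕ) : ℕ :=
  if k % 2 = 1 ∧ j = 1 then (i + (m-1)/2) % m
  else if k % 2 = 1 ∧ j = 2 then (2*i) % m
  else i % m
def ent (m k j i : ℕ) : ℤ := sg k j * ((j*m + pm m k j i + 1 : ℕ) : ℤ)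

lemma sg_cases (k j : ℕ) : sg k j = 1 ∨ sg k j = -1 := by
  unfold sg
  split_ifs
  · left; rfl
  · rcases Nat.even_or_odd (j+1) with h | h
    · left; exact h.neg_one_pow
    · right; exact h.neg_one_pow
  · rcases Nat.even_or_odd j with h | h
    · left; exact h.neg_one_pow
    · right; exact h.neg_one_pow

lemma pm_lt {m : ℕ} (h0 : 0 < m) (k j i : ℕ) : pm m k j i < m := by
  unfold pm; split_ifs <;> exact Nat.mod_lt _ h0

lemma ent_abs (m k j i : ℕ) :
    |ent m k j i| = ((j*m + pm m k j i + 1 : ℕ) : ℤ) := by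
  have hN : (0:ℤ) ≤ ((j*m + pm m k j i + 1 : ℕ) : ℤ) := by positivity
  rcases sg_cases k j with h | h
  · rw [ent, h, one_mul, abs_of_nonneg hN]
  · rw [ent, h, neg_one_mul, abs_neg, abs_of_nonneg hN]

lemma ent_pos_iff (m k j i : ℕ) : 0 < ent m k j i ↔ sg k j = 1 := by
  have hN : (0:ℤ) < ((j*m + pm m k j i + 1 : ℕ) : ℤ) := by positivity
  rcases sg_cases k j with h | h <;> rw [ent, h] <;> constructor <;> intro h2 <;>
    first | rfl | omega | linarith | (exfalso; omega)

lemma ent_neg_iff (m k j i : ℕ) : ent m k j i < 0 ↔ sg k j = -1 := by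
  have hN : (0:ℤ) < ((j*m + pm m k j i + 1 : ℕ) : ℤ) := by positivity
  rcases sg_cases k j with h | h <;> rw [ent, h] <;> constructor <;> intro h2 <;>
    first | rfl | omega | linarith | (exfalso; omega)

lemma ent_ne (m k j i : ℕ) : ent m k j i ≠ 0 := by
  have hN : (0:ℤ) < ((j*m + pm m k j i + 1 : ℕ) : ℤ) := by positivity
  rcases sg_cases k j with h | h <;> rw [ent, h] <;> intro h2 <;> linarith

lemma mod2 {x m : ℕ} (h0 : 0 < m) (h : x < 2*m) : x % m = x ∨ x % m + m = x := by
  rcases Nat.lt_or_ge x m with h1 | h1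
  · left; exact Nat.mod_eq_of_lt h1
  · right
    have e : x % m = x - m := by
      rw [Nat.mod_eq_sub_mod h1, Nat.mod_eq_of_lt (by omega)]
    omega

lemma pm_inj {m : ℕ} (hm : m % 2 = 1) {i i' : ℕ} (h1 : i < m) (h2 : i' < m)
    {k j : ℕ} (he : pm m k j i = pm m k j i') : i = i' := by
  have h0 : 0 < m := by omega
  unfold pm at he
  split_ifs at he
  · have a1 := mod2 h0 (show i + (m-1)/2 < 2*m by omega)
    have a2 := mod2 h0 (show i' + (m-1)/2 < 2*m by omega)
    omega
  · have a1 := mod2 h0 (show 2*i < 2*m by omega)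
    have a2 := mod2 h0 (show 2*i' < 2*m by omega)
    omega
  · rwa [Nat.mod_eq_of_lt h1, Nat.mod_eq_of_lt h2] at he

lemma pm_surj {m : ℕ} (hm : m % 2 = 1) {t : ℕ} (ht : t < m) (k j : ℕ) :
    ∃ i, i < m ∧ pm m k j i = t := by
  have h0 : 0 < m := by omega
  have hs : Function.Surjective
      (fun i : Fin m => (⟨pm m k j i.val, pm_lt h0 k j i.val⟩ : Fin m)) := by
    apply Finite.surjective_of_injective
    intro a b hab
    exact Fin.ext (pm_inj hm a.2 b.2 (by simpa using congrArg Fin.val hab))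
  obtain ⟨i, hi⟩ := hs ⟨t, ht⟩
  exact ⟨i.val, i.2, by simpa using congrArg Fin.val hi⟩

lemma tri {m i : ℕ} (hm : m % 2 = 1) (hi : i < m) :
    i + (i + (m-1)/2) % m = (2*i) % m + (m-1)/2 := by
  have h0 : 0 < m := by omega
  have a1 := mod2 h0 (show i + (m-1)/2 < 2*m by omega)
  have a2 := mod2 h0 (show 2*i < 2*m by omega)
  have b1 : (i + (m-1)/2) % m < m := Nat.mod_lt _ h0
  have b2 : (2*i) % m < m := Nat.mod_lt _ h0
  omega

lemma succmod {m w x : ℕ} (h3 : 3 ≤ m) (hw : w < m) (hx : x < m) :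
    (x+1) % m = w ↔ x = (w + (m-1)) % m := by
  have h1 : 0 < m := by omega
  have a1 := mod2 h1 (show x + 1 < 2*m by omega)
  have a2 := mod2 h1 (show w + (m-1) < 2*m by omega)
  have b1 : (x+1) % m < m := Nat.mod_lt _ h1
  have b2 : (w + (m-1)) % m < m := Nat.mod_lt _ h1
  omega

lemma nself {m x : ℕ} (h3 : 3 ≤ m) (hx : x < m) : (x+1) % m ≠ x := by
  have h1 : 0 < m := by omega
  have a1 := mod2 h1 (show x + 1 < 2*m by omega)
  omega

lemma altsum (K : ℕ) : ∑ j ∈ Finset.range K, ((-1:ℤ))^j = if K % 2 = 1 then 1 else 0 := by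
  induction K with
  | zero => simp
  | succ n ih =>
    rw [Finset.sum_range_succ, ih]
    rcases Nat.even_or_odd n with h | h
    · have h2 : n % 2 = 0 := Nat.even_iff.mp h
      rw [Even.neg_one_pow h]; simp [Nat.add_mod, h2]
    · have h2 : n % 2 = 1 := Nat.odd_iff.mp h
      rw [Odd.neg_one_pow h]; simp [Nat.add_mod, h2]

lemma altsum' (K : ℕ) : ∑ j ∈ Finset.range K, ((-1:ℤ))^(j+1) = if K % 2 = 1 then -1 else 0 := by
  have e : ∀ j, ((-1:ℤ))^(j+1) = (-1) * (-1)^j := by intro j; rw [pow_succ]; ring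
  simp_rw [e]
  rw [← Finset.mul_sum, altsum]
  split_ifs <;> ring

lemma csum {m k : ℕ} (hm : m % 2 = 1) (hk : 2 ≤ k) {i : ℕ} (hi : i < m) :
    ∑ j ∈ Finset.range k, sg k j * (pm m k j i : ℤ)
      = if k % 2 = 1 then (((m-1)/2 : ℕ) : ℤ) else 0 := by
  rcases Nat.even_or_odd k with hke | hko
  · have hk2 : k % 2 = 0 := Nat.even_iff.mp hke
    have e : ∀ j ∈ Finset.range k, sg k j * (pm m k j i : ℤ) = (-1)^j * (i : ℤ) := by
      intro j _
      have e1 : pm m k j i = i := by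
        unfold pm; simp only [hk2]; norm_num; exact Nat.mod_eq_of_lt hi
      rw [e1]
      unfold sg
      split_ifs with h1 h2
      · subst h1; norm_num
      · omega
      · rfl
    rw [Finset.sum_congr rfl e, ← Finset.sum_mul, altsum]
    simp [hk2]
  · have hk1 : k % 2 = 1 := Nat.odd_iff.mp hko
    have hk3 : 3 ≤ k := by omega
    rw [← Finset.sum_range_add_sum_Ico _ hk3]
    have e1 : ∑ j ∈ Finset.range 3, sg k j * (pm m k j i : ℤ) = (((m-1)/2 : ℕ) : ℤ) := by
      have p0 : pm m k 0 i = i := by unfold pm; norm_num; exact Nat.mod_eq_of_lt hi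
      have p1 : pm m k 1 i = (i + (m-1)/2) % m := by unfold pm; simp [hk1]
      have p2 : pm m k 2 i = (2*i) % m := by unfold pm; simp [hk1]
      have s0 : sg k 0 = 1 := by unfold sg; norm_num
      have s1 : sg k 1 = 1 := by unfold sg; norm_num [hk1]
      have s2 : sg k 2 = -1 := by unfold sg; norm_num [hk1]
      rw [Finset.sum_range_succ, Finset.sum_range_succ, Finset.sum_range_one,
        p0, p1, p2, s0, s1, s2]
      have := tri hm hi
      push_cast
      push_cast at this
      linarith
    have e2 : ∑ j ∈ Finset.Ico 3 k, sg k j * (pm m k j i : ℤ) = 0 := by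
      have e : ∀ j ∈ Finset.Ico 3 k, sg k j * (pm m k j i : ℤ) = (-1)^(j+1) * (i:ℤ) := by
        intro j hj
        rw [Finset.mem_Ico] at hj
        have e1 : pm m k j i = i := by
          unfold pm
          have c1 : ¬(k % 2 = 1 ∧ j = 1) := by omega
          have c2 : ¬(k % 2 = 1 ∧ j = 2) := by omega
          simp only [if_neg c1, if_neg c2]
          exact Nat.mod_eq_of_lt hi
        rw [e1]
        unfold sg
        rw [if_neg (by omega : ¬ j = 0), if_pos hk1]
      rw [Finset.sum_congr rfl e, ← Finset.sum_mul,
        Finset.sum_Ico_eq_sub _ hk3, altsum', altsum']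
      norm_num [hk1]
    rw [e1, e2, if_pos hk1]
    ring

lemma vsum_eq {m k : ℕ} (hm : m % 2 = 1) (hk : 2 ≤ k) {i i' : ℕ} (hi : i < m) (hi' : i' < m) :
    ∑ j ∈ Finset.range k, ent m k j i = ∑ j ∈ Finset.range k, ent m k j i' := by
  have e : ∀ i'', i'' < m → ∑ j ∈ Finset.range k, ent m k j i''
      = ∑ j ∈ Finset.range k, sg k j * ((j*m + 1 : ℕ) : ℤ)
        + ∑ j ∈ Finset.range k, sg k j * (pm m k j i'' : ℤ) := by
    intro i'' _
    rw [← Finset.sum_add_distrib]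
    refine Finset.sum_congr rfl fun j _ => ?_
    rw [ent]; push_cast; ring
  rw [e i hi, e i' hi', csum hm hk hi, csum hm hk hi']

def enc (m k : ℕ) (p : Fin k × Fin m) : Fin (m*k) :=
  ⟨p.2.val + p.1.val * m, by
    have h1 := p.1.2
    have h2 := p.2.2
    have h3 : (p.1.val + 1) * m ≤ k * m := Nat.mul_le_mul_right m p.1.2
    have h4 : (p.1.val + 1) * m = p.1.val * m + m := by ring
    have h5 : k * m = m * k := Nat.mul_comm k m
    omega⟩

lemma enc_mod (m k : ℕ) (p : Fin k × Fin m) : ((enc m k p).val) % m = p.2.val := by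
  show (p.2.val + p.1.val * m) % m = p.2.val
  rw [Nat.add_mul_mod_self_right, Nat.mod_eq_of_lt p.2.2]

lemma enc_div {m : ℕ} (h0 : 0 < m) (k : ℕ) (p : Fin k × Fin m) :
    ((enc m k p).val) / m = p.1.val := by
  show (p.2.val + p.1.val * m) / m = p.1.val
  rw [Nat.add_mul_div_right _ _ h0, Nat.div_eq_of_lt p.2.2, Nat.zero_add]

lemma enc_bij {m : ℕ} (h0 : 0 < m) (k : ℕ) : Function.Bijective (enc m k) := by
  constructor
  · intro p q hpq
    have e1 : ((enc m k p).val) % m = ((enc m k q).val) % m := by rw [hpq]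
    have e2 : ((enc m k p).val) / m = ((enc m k q).val) / m := by rw [hpq]
    rw [enc_mod, enc_mod] at e1
    rw [enc_div h0, enc_div h0] at e2
    exact Prod.ext (Fin.ext e2) (Fin.ext e1)
  · intro c
    have hj : c.val / m < k := by
      rw [Nat.div_lt_iff_lt_mul h0]
      exact lt_of_lt_of_eq c.2 (Nat.mul_comm m k)
    refine ⟨(⟨c.val / m, hj⟩, ⟨c.val % m, Nat.mod_lt _ h0⟩), ?_⟩
    apply Fin.ext
    show c.val % m + (c.val / m) * m = c.val
    exact Nat.mod_add_div' c.val m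

lemma dcu {m a b a' b' : ℕ} (h0 : 0 < m) (hb : b < m) (hb' : b' < m)
    (h : a*m + b = a'*m + b') : a = a' ∧ b = b' := by
  have e1 : (b + a*m)/m = a := by
    rw [Nat.add_mul_div_right _ _ h0, Nat.div_eq_of_lt hb, Nat.zero_add]
  have e2 : (b' + a'*m)/m = a' := by
    rw [Nat.add_mul_div_right _ _ h0, Nat.div_eq_of_lt hb', Nat.zero_add]
  have ha : a = a' := by rw [← e1, ← e2, show b + a*m = b' + a'*m by omega]
  subst ha
  exact ⟨rfl, by omega⟩

lemma ent_bound {m k : ℕ} (h0 : 0 < m) {j : ℕ} (hj : j < k) (i : ℕ) :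
    j*m + pm m k j i + 1 ≤ m*k := by
  have h1 : pm m k j i < m := pm_lt h0 k j i
  have h2 : (j+1)*m ≤ k*m := Nat.mul_le_mul_right m hj
  have h3 : (j+1)*m = j*m + m := by ring
  have h4 : k*m = m*k := Nat.mul_comm k m
  omega

lemma smr_val {m k : ℕ} {x : ℤ} :
    SMRvalue m (2*k) 2 x ↔ (x ≠ 0 ∧ |x| ≤ ((m*k : ℕ) : ℤ)) := by
  have hpar : ¬ (m * (2*k) % 2 = 1) := by
    rw [show m*(2*k) = 2*(m*k) by ring]
    omega
  rw [SMRvalue, if_neg hpar]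
  have e : (m:ℤ) * ((2*k : ℕ) : ℤ) / 2 = ((m*k : ℕ) : ℤ) := by
    push_cast
    rw [show (m:ℤ)*(2*(k:ℤ)) = 2*((m:ℤ)*k) by ring]
    exact Int.mul_ediv_cancel_left _ two_ne_zero
  rw [e]

def Arr (m k : ℕ) (i' : Fin m) (c : Fin (m*k)) : Option ℤ :=
  if i'.val = c.val % m then some (ent m k (c.val / m) (c.val % m))
  else if i'.val = (c.val % m + 1) % m then some (-ent m k (c.val / m) (c.val % m))
  else none

end SMR17

namespace SMR17
lemma two_point {α M : Type*} [Fintype α] [DecidableEq α] [AddCommMonoid M]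
    {A B : α} (h : A ≠ B) (u v : M) :
    ∑ i : α, (if i = A then u else if i = B then v else 0) = u + v := by
  have e : ∀ i : α, (if i = A then u else if i = B then v else 0)
      = (if i = A then u else 0) + (if i = B then v else 0) := by
    intro i
    by_cases h1 : i = A
    · subst h1
      rw [if_pos rfl, if_pos rfl, if_neg h, add_zero]
    · rw [if_neg h1, if_neg h1, zero_add]
  simp_rw [e]
  rw [Finset.sum_add_distrib]
  simp [Finset.sum_ite_eq']
end SMR17

open SMR17 in
private theorem SMR17_aux (m n r : ℕ) (hm : Odd m) (hm3 : 3 ≤ m) (hr : Even r)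
    (hr4 : 4 ≤ r) (h : m * r = 2 * n) :
    ∃ A : Fin m → Fin n → Option ℤ,
      ((∀ i, (Finset.univ.filter fun j => (A i j).isSome).card = r) ∧
       (∀ j, (Finset.univ.filter fun i => (A i j).isSome).card = 2) ∧
       (∀ i j x, A i j = some x → SMRvalue m r 2 x) ∧
       (∀ x : ℤ, SMRvalue m r 2 x → ∃! p : Fin m × Fin n, A p.1 p.2 = some x) ∧
       (∀ i, ∑ j, (A i j).getD 0 = 0) ∧
       (∀ j, ∑ i, (A i j).getD 0 = 0)) ∧
      ((∀ i, (Finset.univ.filter fun j => 0 < (A i j).getD 0).card =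
            (Finset.univ.filter fun j => (A i j).getD 0 < 0).card) ∧
       (∀ j, (Finset.univ.filter fun i => 0 < (A i j).getD 0).card =
            (Finset.univ.filter fun i => (A i j).getD 0 < 0).card)) := by
  obtain ⟨k, hk⟩ := hr
  have hrk : r = 2 * k := by omega
  subst hrk
  have hn : n = m * k := by
    rw [show m * (2*k) = 2 * (m*k) by ring] at h
    exact (Nat.eq_of_mul_eq_mul_left two_pos h).symm
  subst hn
  have hm2 : m % 2 = 1 := Nat.odd_iff.mp hm
  have h0 : 0 < m := by omega
  have hk2 : 2 ≤ k := by omega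
  -- basic data about rows
  have htlt : ∀ i' : Fin m, (i'.val + (m-1)) % m < m := fun i' => Nat.mod_lt _ h0
  have hts : ∀ i' : Fin m, ((i'.val + (m-1)) % m + 1) % m = i'.val :=
    fun i' => (succmod hm3 i'.isLt (htlt i')).mpr rfl
  have htne : ∀ i' : Fin m, (i'.val + (m-1)) % m ≠ i'.val := by
    intro i' e
    have h2 := hts i'
    rw [e] at h2
    exact nself hm3 i'.isLt h2
  have hAB : ∀ i' : Fin m,
      (⟨i'.val, i'.isLt⟩ : Fin m) ≠ ⟨(i'.val + (m-1)) % m, htlt i'⟩ := by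
    intro i' e
    exact htne i' (congrArg Fin.val e).symm
  have rowform : ∀ (i' : Fin m) (j : Fin k) (i : Fin m),
      Arr m k i' (enc m k (j, i)) =
        (if i = (⟨i'.val, i'.isLt⟩ : Fin m) then some (ent m k j.val i'.val)
         else if i = (⟨(i'.val + (m-1)) % m, htlt i'⟩ : Fin m) then
           some (-ent m k j.val ((i'.val + (m-1)) % m))
         else none) := by
    intro i' j i
    simp only [Arr, enc_mod, enc_div h0]
    by_cases h1 : i'.val = i.val
    · rw [if_pos h1, if_pos (Fin.ext h1.symm), h1]
    · rw [if_neg h1, if_neg (show ¬ i = ⟨i'.val, i'.isLt⟩ from fun e => h1 (congrArg Fin.val e).symm)]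
      by_cases h2 : i'.val = (i.val + 1) % m
      · have e3 : i.val = (i'.val + (m-1)) % m := (succmod hm3 i'.isLt i.isLt).mp h2.symm
        rw [if_pos h2, if_pos (Fin.ext e3), e3]
      · have e4 : ¬ i = ⟨(i'.val + (m-1)) % m, htlt i'⟩ := by
          intro e
          apply h2
          rw [congrArg Fin.val e]
          exact (hts i').symm
        rw [if_neg h2, if_neg e4]
  -- column data
  have hjlt : ∀ c : Fin (m*k), c.val / m < k := by
    intro c
    rw [Nat.div_lt_iff_lt_mul h0]
    exact lt_of_lt_of_eq c.2 (Nat.mul_comm m k)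
  have halt : ∀ c : Fin (m*k), c.val % m < m := fun c => Nat.mod_lt _ h0
  have hblt : ∀ c : Fin (m*k), (c.val % m + 1) % m < m := fun c => Nat.mod_lt _ h0
  have hABc : ∀ c : Fin (m*k),
      (⟨c.val % m, halt c⟩ : Fin m) ≠ ⟨(c.val % m + 1) % m, hblt c⟩ := by
    intro c e
    exact nself hm3 (halt c) (congrArg Fin.val e).symm
  have colform : ∀ (c : Fin (m*k)) (i' : Fin m),
      Arr m k i' c =
        (if i' = (⟨c.val % m, halt c⟩ : Fin m) then some (ent m k (c.val / m) (c.val % m))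
         else if i' = (⟨(c.val % m + 1) % m, hblt c⟩ : Fin m) then
           some (-ent m k (c.val / m) (c.val % m))
         else none) := by
    intro c i'
    simp only [Arr, Fin.ext_iff]
  refine ⟨Arr m k, ⟨?_, ?_, ?_, ?_, ?_, ?_⟩, ?_, ?_⟩
  · -- row cards
    intro i'
    rw [Finset.card_filter,
      ← Fintype.sum_bijective (enc m k) (enc_bij h0 k) _ _ (fun p => rfl),
      Fintype.sum_prod_type]
    have e1 : ∀ (j : Fin k) (i : Fin m),
        (if (Arr m k i' (enc m k (j, i))).isSome then (1:ℕ) else 0)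
        = (if i = (⟨i'.val, i'.isLt⟩ : Fin m) then 1
           else if i = (⟨(i'.val + (m-1)) % m, htlt i'⟩ : Fin m) then 1 else 0) := by
      intro j i
      rw [rowform i' j i]
      by_cases h1 : i = (⟨i'.val, i'.isLt⟩ : Fin m)
      · simp [h1]
      · by_cases h2 : i = (⟨(i'.val + (m-1)) % m, htlt i'⟩ : Fin m) <;>
          simp [h1, h2, Fin.ext_iff, htne i']
    simp_rw [e1, two_point (hAB i')]
    simp [Finset.sum_const, Finset.card_univ, Nat.mul_comm]
  · -- col cards
    intro c
    rw [Finset.card_filter]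
    have e1 : ∀ i' : Fin m,
        (if (Arr m k i' c).isSome then (1:ℕ) else 0)
        = (if i' = (⟨c.val % m, halt c⟩ : Fin m) then 1
           else if i' = (⟨(c.val % m + 1) % m, hblt c⟩ : Fin m) then 1 else 0) := by
      intro i'
      rw [colform c i']
      by_cases h1 : i' = (⟨c.val % m, halt c⟩ : Fin m)
      · rw [if_pos h1, if_pos h1]
        simp
      · rw [if_neg h1, if_neg h1]
        by_cases h2 : i' = (⟨(c.val % m + 1) % m, hblt c⟩ : Fin m)
        · rw [if_pos h2, if_pos h2]
          simp
        · rw [if_neg h2, if_neg h2]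
          simp
    simp_rw [e1, two_point (hABc c)]
  · -- values
    intro i c x hx
    rw [colform c i] at hx
    rw [smr_val]
    have hbnd : |ent m k (c.val / m) (c.val % m)| ≤ ((m*k : ℕ) : ℤ) := by
      rw [ent_abs]
      exact_mod_cast ent_bound h0 (hjlt c) (c.val % m)
    split_ifs at hx
    · cases hx
      exact ⟨ent_ne m k _ _, hbnd⟩
    · cases hx
      refine ⟨neg_ne_zero.mpr (ent_ne m k _ _), ?_⟩
      rwa [abs_neg]
  · -- existence and uniqueness
    intro x hx
    rw [smr_val] at hx
    obtain ⟨hx0, hxb⟩ := hx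
    set u := x.natAbs with hu
    have hu1 : 1 ≤ u := Int.natAbs_pos.mpr hx0
    have hu2 : u ≤ m*k := by
      rw [Int.abs_eq_natAbs] at hxb
      exact_mod_cast hxb
    have hjk : (u-1)/m < k := by
      rw [Nat.div_lt_iff_lt_mul h0]
      have e : k*m = m*k := Nat.mul_comm k m
      omega
    set j := (u-1)/m with hjdef
    set t0 := (u-1)%m with ht0def
    have ht0 : t0 < m := Nat.mod_lt _ h0
    obtain ⟨i, hi, hpi⟩ := pm_surj hm2 ht0 k j
    have hdm : m * j + t0 = u - 1 := Nat.div_add_mod (u-1) m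
    have hval : j*m + pm m k j i + 1 = u := by
      rw [hpi]
      have e : j*m = m*j := Nat.mul_comm j m
      omega
    have hent : ent m k j i = sg k j * (u:ℤ) := by
      rw [ent, hval]
    set c : Fin (m*k) := enc m k (⟨j, hjk⟩, ⟨i, hi⟩) with hc
    have hcmod : c.val % m = i := enc_mod m k _
    have hcdiv : c.val / m = j := enc_div h0 k _
    have hip : (i+1)%m < m := Nat.mod_lt _ h0
    have hxcases : x = sg k j * (u:ℤ) ∨ x = -(sg k j * (u:ℤ)) := by
      rcases Int.natAbs_eq x with e | e <;> rcases sg_cases k j with hs | hs <;>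
        rw [hs] <;> [left; right; right; left] <;> omega
    have hne2 : sg k j * (u:ℤ) ≠ -(sg k j * (u:ℤ)) := by
      rcases sg_cases k j with hs | hs <;> rw [hs] <;> simp <;> omega
    refine ⟨(if x = sg k j * (u:ℤ) then ⟨⟨i, hi⟩, c⟩ else ⟨⟨(i+1)%m, hip⟩, c⟩), ?_, ?_⟩
    · by_cases hxe : x = sg k j * (u:ℤ)
      · rw [if_pos hxe]
        show Arr m k ⟨i, hi⟩ c = some x
        simp only [Arr, hcmod, hcdiv]
        simp [hent, hxe]
      · rw [if_neg hxe]
        show Arr m k ⟨(i+1)%m, hip⟩ c = some x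
        have hxe' : x = -(sg k j * (u:ℤ)) := by tauto
        simp only [Arr, hcmod, hcdiv]
        rw [if_neg (nself hm3 hi)]
        simp [hent, hxe']
    · rintro ⟨q1, q2⟩ hq
      simp only [Arr] at hq
      have hq2j : q2.val / m < k := hjlt q2
      have hq2a : q2.val % m < m := halt q2
      have decode : j*m + pm m k j i + 1 = q2.val/m * m + pm m k (q2.val/m) (q2.val%m) + 1 →
          q2.val/m = j ∧ q2.val%m = i := by
        intro e
        have e2 := dcu h0 (pm_lt h0 k j i) (pm_lt h0 k (q2.val/m) (q2.val%m))
          (Nat.add_right_cancel e)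
        refine ⟨e2.1.symm, ?_⟩
        have e3 := e2.2
        rw [← e2.1] at e3
        exact pm_inj hm2 hq2a hi e3.symm
      have hq2eq : ∀ (hd : q2.val/m = j) (ha : q2.val%m = i), q2 = c := by
        intro hd ha
        apply Fin.ext
        have e1 : m * (q2.val/m) + q2.val % m = q2.val := Nat.div_add_mod q2.val m
        have e2 : m * (c.val/m) + c.val % m = c.val := Nat.div_add_mod c.val m
        rw [hd, ha] at e1
        rw [hcdiv, hcmod] at e2
        omega
      split_ifs at hq with h1 h2
      · have hxv : x = ent m k (q2.val/m) (q2.val%m) := (Option.some.inj hq).symm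
        have habs : q2.val/m * m + pm m k (q2.val/m) (q2.val%m) + 1 = u := by
          have e := ent_abs m k (q2.val/m) (q2.val%m)
          rw [← hxv, Int.abs_eq_natAbs, ← hu] at e
          exact_mod_cast e.symm
        obtain ⟨hd, ha⟩ := decode (hval.trans habs.symm)
        have hq2c : q2 = c := hq2eq hd ha
        have hxe : x = sg k j * (u:ℤ) := by
          rw [hxv, hd, ha, hent]
        rw [if_pos hxe]
        refine Prod.ext ?_ hq2c
        · apply Fin.ext
          show q1.val = i
          rw [h1, ha]
      · have hxv : x = -ent m k (q2.val/m) (q2.val%m) := (Option.some.inj hq).symm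
        have habs : q2.val/m * m + pm m k (q2.val/m) (q2.val%m) + 1 = u := by
          have e := ent_abs m k (q2.val/m) (q2.val%m)
          have e2 : |x| = |ent m k (q2.val/m) (q2.val%m)| := by rw [hxv, abs_neg]
          rw [Int.abs_eq_natAbs, ← hu] at e2
          rw [← e2] at e
          exact_mod_cast e.symm
        obtain ⟨hd, ha⟩ := decode (hval.trans habs.symm)
        have hq2c : q2 = c := hq2eq hd ha
        have hxe : x = -(sg k j * (u:ℤ)) := by
          rw [hxv, hd, ha, hent]
        rw [if_neg (by rw [hxe]; exact (Ne.symm hne2))]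
        refine Prod.ext ?_ hq2c
        · apply Fin.ext
          show q1.val = (i+1)%m
          rw [h2, ha]
  · -- row sums
    intro i'
    rw [← Fintype.sum_bijective (enc m k) (enc_bij h0 k) _ _ (fun p => rfl),
      Fintype.sum_prod_type]
    have e1 : ∀ (j : Fin k) (i : Fin m),
        (Arr m k i' (enc m k (j, i))).getD 0
        = (if i = (⟨i'.val, i'.isLt⟩ : Fin m) then ent m k j.val i'.val
           else if i = (⟨(i'.val + (m-1)) % m, htlt i'⟩ : Fin m) then
             -ent m k j.val ((i'.val + (m-1)) % m) else 0) := by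
      intro j i
      rw [rowform i' j i]
      by_cases h1 : i = (⟨i'.val, i'.isLt⟩ : Fin m)
      · simp [h1]
      · by_cases h2 : i = (⟨(i'.val + (m-1)) % m, htlt i'⟩ : Fin m) <;>
          simp [h1, h2, Fin.ext_iff, htne i']
    simp_rw [e1, two_point (hAB i')]
    rw [Finset.sum_add_distrib]
    have e2 : ∑ j : Fin k, ent m k j.val i'.val
        = ∑ j ∈ Finset.range k, ent m k j i'.val :=
      Fin.sum_univ_eq_sum_range (fun j => ent m k j i'.val) k
    have e3 : ∑ j : Fin k, -ent m k j.val ((i'.val + (m-1)) % m)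
        = -∑ j ∈ Finset.range k, ent m k j ((i'.val + (m-1)) % m) := by
      rw [← Finset.sum_neg_distrib]
      exact Fin.sum_univ_eq_sum_range (fun j => -ent m k j ((i'.val + (m-1)) % m)) k
    rw [e2, e3, vsum_eq hm2 hk2 i'.isLt (htlt i')]
    ring
  · -- col sums
    intro c
    have e1 : ∀ i' : Fin m,
        (Arr m k i' c).getD 0
        = (if i' = (⟨c.val % m, halt c⟩ : Fin m) then ent m k (c.val / m) (c.val % m)
           else if i' = (⟨(c.val % m + 1) % m, hblt c⟩ : Fin m) then
             -ent m k (c.val / m) (c.val % m) else 0) := by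
      intro i'
      rw [colform c i']
      by_cases h1 : i' = (⟨c.val % m, halt c⟩ : Fin m)
      · rw [if_pos h1, if_pos h1]
        simp
      · rw [if_neg h1, if_neg h1]
        by_cases h2 : i' = (⟨(c.val % m + 1) % m, hblt c⟩ : Fin m)
        · rw [if_pos h2, if_pos h2]
          simp
        · rw [if_neg h2, if_neg h2]
          simp
    simp_rw [e1, two_point (hABc c)]
    ring
  · -- shiftable rows
    intro i'
    have hpos : (Finset.univ.filter fun c => 0 < (Arr m k i' c).getD 0).card = k := by
      rw [Finset.card_filter,
        ← Fintype.sum_bijective (enc m k) (enc_bij h0 k) _ _ (fun p => rfl),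
        Fintype.sum_prod_type]
      have e1 : ∀ (j : Fin k) (i : Fin m),
          (if 0 < (Arr m k i' (enc m k (j, i))).getD 0 then (1:ℕ) else 0)
          = (if i = (⟨i'.val, i'.isLt⟩ : Fin m) then (if sg k j.val = 1 then 1 else 0)
             else if i = (⟨(i'.val + (m-1)) % m, htlt i'⟩ : Fin m) then
               (if sg k j.val = -1 then 1 else 0) else 0) := by
        intro j i
        rw [rowform i' j i]
        by_cases h1 : i = (⟨i'.val, i'.isLt⟩ : Fin m)
        · simp [h1, ent_pos_iff]
        · by_cases h2 : i = (⟨(i'.val + (m-1)) % m, htlt i'⟩ : Fin m) <;>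
            simp [h1, h2, Fin.ext_iff, htne i', neg_pos, ent_neg_iff]
      simp_rw [e1, two_point (hAB i')]
      have e2 : ∀ j : Fin k,
          ((if sg k j.val = 1 then (1:ℕ) else 0) + (if sg k j.val = -1 then 1 else 0)) = 1 := by
        intro j
        rcases sg_cases k j.val with hs | hs <;> norm_num [hs]
      simp_rw [e2]
      simp [Finset.card_univ]
    have hneg : (Finset.univ.filter fun c => (Arr m k i' c).getD 0 < 0).card = k := by
      rw [Finset.card_filter,
        ← Fintype.sum_bijective (enc m k) (enc_bij h0 k) _ _ (fun p => rfl),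
        Fintype.sum_prod_type]
      have e1 : ∀ (j : Fin k) (i : Fin m),
          (if (Arr m k i' (enc m k (j, i))).getD 0 < 0 then (1:ℕ) else 0)
          = (if i = (⟨i'.val, i'.isLt⟩ : Fin m) then (if sg k j.val = -1 then 1 else 0)
             else if i = (⟨(i'.val + (m-1)) % m, htlt i'⟩ : Fin m) then
               (if sg k j.val = 1 then 1 else 0) else 0) := by
        intro j i
        rw [rowform i' j i]
        by_cases h1 : i = (⟨i'.val, i'.isLt⟩ : Fin m)
        · simp [h1, ent_neg_iff]
        · by_cases h2 : i = (⟨(i'.val + (m-1)) % m, htlt i'⟩ : Fin m) <;>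
            simp [h1, h2, Fin.ext_iff, htne i', neg_lt_zero, ent_pos_iff]
      simp_rw [e1, two_point (hAB i')]
      have e2 : ∀ j : Fin k,
          ((if sg k j.val = -1 then (1:ℕ) else 0) + (if sg k j.val = 1 then 1 else 0)) = 1 := by
        intro j
        rcases sg_cases k j.val with hs | hs <;> norm_num [hs]
      simp_rw [e2]
      simp [Finset.card_univ]
    rw [hpos, hneg]
  · -- shiftable cols
    intro c
    have e1 : ∀ (P : ℤ → Prop) [DecidablePred P] (hP : ¬ P 0),
        (Finset.univ.filter fun i' => P ((Arr m k i' c).getD 0)).card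
        = ((if P (ent m k (c.val / m) (c.val % m)) then (1:ℕ) else 0)
          + (if P (-ent m k (c.val / m) (c.val % m)) then 1 else 0)) := by
      intro P _ hP
      rw [Finset.card_filter]
      have e : ∀ i' : Fin m,
          (if P ((Arr m k i' c).getD 0) then (1:ℕ) else 0)
          = (if i' = (⟨c.val % m, halt c⟩ : Fin m) then
               (if P (ent m k (c.val / m) (c.val % m)) then (1:ℕ) else 0)
             else if i' = (⟨(c.val % m + 1) % m, hblt c⟩ : Fin m) then
               (if P (-ent m k (c.val / m) (c.val % m)) then 1 else 0) else 0) := by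
        intro i'
        rw [colform c i']
        by_cases h1 : i' = (⟨c.val % m, halt c⟩ : Fin m)
        · rw [if_pos h1, if_pos h1]
          simp
        · rw [if_neg h1, if_neg h1]
          by_cases h2 : i' = (⟨(c.val % m + 1) % m, hblt c⟩ : Fin m)
          · rw [if_pos h2, if_pos h2]
            simp
          · rw [if_neg h2, if_neg h2]
            simp [hP]
      simp_rw [e]
      exact two_point (hABc c) _ _
    rw [e1 (fun y => 0 < y) (by norm_num), e1 (fun y => y < 0) (by norm_num)]
    rcases (ent_ne m k (c.val / m) (c.val % m)).lt_or_gt with he | he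
    · have g1 : ¬ 0 < ent m k (c.val / m) (c.val % m) := not_lt.mpr he.le
      have g2 : 0 < -ent m k (c.val / m) (c.val % m) := neg_pos.mpr he
      have g3 : ¬ -ent m k (c.val / m) (c.val % m) < 0 := not_lt.mpr (neg_nonneg.mpr he.le)
      simp [g1, g2, g3, he]
    · have g1 : 0 < ent m k (c.val / m) (c.val % m) := he
      have g2 : ¬ 0 < -ent m k (c.val / m) (c.val % m) := not_lt.mpr (neg_nonpos_of_nonneg he.le)
      have g3 : -ent m k (c.val / m) (c.val % m) < 0 := neg_lt_zero.mpr he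
      have g4 : ¬ ent m k (c.val / m) (c.val % m) < 0 := not_lt.mpr he.le
      simp [g1, g2, g3, g4]


theorem stmt_17 (m n r : ℕ) (hm : Odd m) (hm3 : 3 ≤ m) (hr : Even r)
    (hr4 : 4 ≤ r) (h : m * r = 2 * n) : ShiftableSMR m n r 2 := by
  obtain ⟨A, hA, hS⟩ := SMR17_aux m n r hm hm3 hr hr4 h
  exact ⟨A, hA, hS⟩
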